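/- Let n ≥ 2, σ ∈ (0,1], and let u ∈ C(closure(B₁)) be harmonic in the unit ball B₁ ⊂ ℝ^d (any dimension d ≥ 2) with boundary values g ∈ C^{0,σ}(∂B₁). Then u ∈ C^{0,σ/2}(closure(B₁)) with ‖u‖_{C^{0,σ/2}(closure(B₁))} ≤ 2d·5^σ·‖g‖_{C^{0,σ}(∂B₁)}. -/

import Mathlib

open Metric

noncomputable def lap {d : ℕ} (f : EuclideanSpace ℝ (Fin d) → ℝ)
    (x : EuclideanSpace ℝ (Fin d)) : ℝ :=
  ∑ i, fderiv ℝ (fun y => fderiv ℝ f y (EuclideanSpace.single i 1)) x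
    (EuclideanSpace.single i 1)

/-!
A C² function whose Laplacian is nonnegative on a ball does not exceed its maximum on the boundary
sphere: after adding `ε ‖y - c‖²` its Laplacian becomes positive, which is impossible at an interior
maximum, where every second directional derivative is nonpositive. Hence `|w| ≤ Ψ` on the ball for
`w` harmonic and `Ψ` superharmonic as soon as this holds on the sphere.

For a point `x₀` of the unit sphere, the barrier `K (2 - 2 ⟪x₀, y⟫) ^ (σ / 2)` is a concave power of
an affine function, hence superharmonic, and equals `K ‖y - x₀‖ ^ σ` on the sphere, so comparison
gives `|u x - u x₀| ≤ K (4 ‖x - x₀‖) ^ (σ / 2)`. Two points `y, z` at distance `δ` with `y` within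
`δ` of the sphere are compared through the radial projection of `y`. If `y` lies deeper, the
harmonic function `u (· + z - y) - u` on the ball of radius `1 - δ` has boundary values controlled
by the previous case, and comparison carries the bound inside.
-/

open Filter Topology Laplacian InnerProductSpace Module

theorem IsLocalMax.deriv_deriv_nonpos {g : ℝ → ℝ} {a : ℝ} (hmax : IsLocalMax g a)
    (hg : ContinuousAt g a) : deriv (deriv g) a ≤ 0 := by
  by_contra! hpos
  have hconst : g =ᶠ[𝓝 a] fun _ => g a :=
    (hmax.and (isLocalMin_of_deriv_deriv_pos hpos hmax.deriv_eq_zero hg)).mono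
      fun _ h => le_antisymm h.1 h.2
  have hderiv : deriv g =ᶠ[𝓝 a] fun _ => 0 := by
    simpa only [deriv_const'] using hconst.deriv
  simp [hderiv.deriv_eq] at hpos

theorem iteratedFDeriv_two_eq_deriv_deriv_comp_add_smul {E F : Type*} [NormedAddCommGroup E]
    [NormedSpace ℝ E] [NormedAddCommGroup F] [NormedSpace ℝ F] {f : E → F} {x : E}
    (hf : ContDiffAt ℝ 2 f x) (v : E) :
    iteratedFDeriv ℝ 2 f x ![v, v] = deriv (deriv fun s : ℝ => f (x + s • v)) 0 := by
  have hline : Tendsto (fun s : ℝ => x + s • v) (𝓝 0) (𝓝 x) :=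
    Continuous.tendsto' (by fun_prop) 0 x (by simp)
  have hfirst : deriv (fun s : ℝ => f (x + s • v)) =ᶠ[𝓝 0]
      fun s => iteratedFDeriv ℝ 1 f (x + s • v) (fun _ => v) := by
    filter_upwards [hline.eventually (hf.eventually (by simp))] with s hs
    simpa using (hs.of_le one_le_two).deriv_fderiv_add_smul (n := 0)
  have hsecond := ContDiffAt.deriv_fderiv_add_smul (n := 1) (t := (0 : ℝ)) (y := v)
    (by rw [zero_smul, add_zero]; exact hf)
  rw [hfirst.deriv_eq, hsecond, zero_smul, add_zero]
  congr 1
  ext i; fin_cases i <;> rfl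

section Laplacian

variable {E F : Type*} [NormedAddCommGroup E] [InnerProductSpace ℝ E] [FiniteDimensional ℝ E]
  [NormedAddCommGroup F] [NormedSpace ℝ F]

theorem laplacian_eq_sum_deriv_deriv {f : E → ℝ} {x : E} (hf : ContDiffAt ℝ 2 f x) :
    Δ f x = ∑ i, deriv (deriv fun s : ℝ => f (x + s • stdOrthonormalBasis ℝ E i)) 0 := by
  simp only [laplacian_eq_iteratedFDeriv_stdOrthonormalBasis,
    iteratedFDeriv_two_eq_deriv_deriv_comp_add_smul hf]

theorem IsLocalMax.laplacian_nonpos {f : E → ℝ} {x : E} (hmax : IsLocalMax f x)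
    (hf : ContDiffAt ℝ 2 f x) : Δ f x ≤ 0 := by
  rw [laplacian_eq_sum_deriv_deriv hf]
  refine Finset.sum_nonpos fun i _ => ?_
  have hline : ContinuousAt (fun s : ℝ => x + s • stdOrthonormalBasis ℝ E i) 0 := by fun_prop
  have h0 : x + (0 : ℝ) • stdOrthonormalBasis ℝ E i = x := by simp
  rw [← h0] at hmax hf
  exact (hmax.comp_continuous (b := 0) hline).deriv_deriv_nonpos
    (ContinuousAt.comp (x := 0) hf.continuousAt hline)

theorem ConcaveOn.laplacian_nonpos {f : E → ℝ} {S : Set E} {x : E} (hconc : ConcaveOn ℝ S f)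
    (hS : S ∈ 𝓝 x) (hf : ContDiffAt ℝ 2 f x) : Δ f x ≤ 0 := by
  rw [laplacian_eq_sum_deriv_deriv hf]
  refine Finset.sum_nonpos fun i _ => ?_
  set v := stdOrthonormalBasis ℝ E i
  have hline : Tendsto (fun s : ℝ => x + s • v) (𝓝 0) (𝓝 x) :=
    Continuous.tendsto' (by fun_prop) 0 x (by simp)
  obtain ⟨ε, hε, hball⟩ := Metric.eventually_nhds_iff_ball.1
    (hline.eventually ((hf.eventually (by simp)).and hS))
  have hL : ⇑(AffineMap.lineMap x (x + v) : ℝ →ᵃ[ℝ] E) = fun s => x + s • v := by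
    funext s; simp [AffineMap.lineMap_apply, add_comm]
  have hconc_line : ConcaveOn ℝ (ball 0 ε) fun s : ℝ => f (x + s • v) := by
    have := hconc.comp_affineMap (AffineMap.lineMap x (x + v))
    rw [hL] at this
    exact this.subset (fun s hs => (hball s hs).2) (convex_ball 0 ε)
  have hdiff (s : ℝ) (hs : s ∈ ball 0 ε) : DifferentiableAt ℝ (fun s : ℝ => f (x + s • v)) s :=
    ((hball s hs).1.differentiableAt two_ne_zero).comp s (by fun_prop)
  rw [← derivWithin_of_mem_nhds (ball_mem_nhds 0 hε)]
  exact (hconc_line.antitoneOn_deriv hdiff).derivWithin_nonpos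

theorem laplacian_comp_add_right (f : E → F) (a x : E) :
    Δ (fun y => f (y + a)) x = Δ f (x + a) := by
  simp [laplacian_eq_iteratedFDeriv_stdOrthonormalBasis, iteratedFDeriv_comp_add_right]

theorem HarmonicAt.comp_add_right {f : E → F} {x a : E} (h : HarmonicAt f (x + a)) :
    HarmonicAt (fun y => f (y + a)) x := by
  refine ⟨h.1.comp x (contDiffAt_id.add contDiffAt_const), ?_⟩
  filter_upwards [((continuous_add_const a).tendsto x).eventually h.2] with y hy
  rw [laplacian_comp_add_right]
  exact hy

theorem laplacian_norm_sub_sq (c x : E) :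
    Δ (fun y => ‖y - c‖ ^ 2) x = 2 * finrank ℝ E := by
  have hD2 : fderiv ℝ (fderiv ℝ fun y : E => ‖y‖ ^ 2) (x - c) = 2 • innerSL ℝ := by
    rw [fderiv_norm_sq, ← FunLike.coe_smul]
    exact ContinuousLinearMap.fderiv _
  have hunit (i : Fin (finrank ℝ E)) :
      innerSL ℝ (stdOrthonormalBasis ℝ E i) (stdOrthonormalBasis ℝ E i) = 1 := by
    rw [innerSL_apply_apply]
    simp
  simp only [sub_eq_add_neg] at hD2 ⊢
  rw [laplacian_comp_add_right (fun y => ‖y‖ ^ 2)]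
  simp [laplacian_eq_iteratedFDeriv_stdOrthonormalBasis, iteratedFDeriv_two_apply, hD2, hunit,
    mul_comm]

theorem le_of_forall_mem_sphere_le_of_laplacian_nonneg [Nontrivial E] {w : E → ℝ} {c : E}
    {R M : ℝ} (hcont : ContinuousOn w (closedBall c R)) (hw : ContDiffOn ℝ 2 w (ball c R))
    (hΔ : ∀ x ∈ ball c R, 0 ≤ Δ w x) (hbd : ∀ x ∈ sphere c R, w x ≤ M) :
    ∀ x ∈ closedBall c R, w x ≤ M := by
  by_contra! ⟨x₀, hx₀, hlt⟩
  obtain ⟨ε, hε, hεR⟩ := exists_pos_mul_lt (sub_pos.2 hlt) (R ^ 2)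
  set q : E → ℝ := fun y => ‖y - c‖ ^ 2
  have hq : ContDiff ℝ 2 q := (contDiff_norm_sq ℝ).comp (contDiff_id.sub contDiff_const)
  set W := w + ε • q
  obtain ⟨xs, hxs, hmax⟩ := (isCompact_closedBall c R).exists_isMaxOn ⟨x₀, hx₀⟩
    (hcont.add (hq.continuous.continuousOn.const_smul ε))
  have hW₀ : w x₀ ≤ W xs :=
    (le_add_of_nonneg_right (mul_nonneg hε.le (sq_nonneg _))).trans (hmax hx₀)
  -- `ε R² < w x₀ - M` keeps the maximum of `W` off the sphere
  have hxs_ball : xs ∈ ball c R := by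
    refine lt_of_le_of_ne (mem_closedBall.1 hxs) fun hR => ?_
    have := hbd xs (mem_sphere.2 hR)
    simp only [W, q, Pi.add_apply, Pi.smul_apply, smul_eq_mul, ← dist_eq_norm, hR] at hW₀
    linarith
  have hxs_nhds := isOpen_ball.mem_nhds hxs_ball
  have hεq : ContDiffAt ℝ 2 (ε • q) xs := hq.contDiffAt.const_smul ε
  have hΔW : Δ W xs = Δ w xs + ε * (2 * finrank ℝ E) := by
    rw [(hw.contDiffAt hxs_nhds).laplacian_add hεq,
      laplacian_smul ε hq.contDiffAt, laplacian_norm_sub_sq, smul_eq_mul]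
  have hΔW_nonpos : Δ W xs ≤ 0 :=
    (hmax.isLocalMax (mem_of_superset hxs_nhds ball_subset_closedBall)).laplacian_nonpos
      ((hw.contDiffAt hxs_nhds).add hεq)
  have hdim : (0 : ℝ) < finrank ℝ E := by exact_mod_cast finrank_pos
  nlinarith [hΔ xs hxs_ball]

theorem abs_le_of_forall_mem_sphere_abs_le [Nontrivial E] {w Ψ : E → ℝ} {c : E} {R : ℝ}
    (hw : ContinuousOn w (closedBall c R)) (hwh : HarmonicOnNhd w (ball c R))
    (hΨ : ContinuousOn Ψ (closedBall c R)) (hΨd : ContDiffOn ℝ 2 Ψ (ball c R))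
    (hΔΨ : ∀ x ∈ ball c R, Δ Ψ x ≤ 0) (hbd : ∀ x ∈ sphere c R, |w x| ≤ Ψ x) :
    ∀ x ∈ closedBall c R, |w x| ≤ Ψ x := by
  have hw2 := hwh.contDiffOn
  have hat (x : E) (hx : x ∈ ball c R) : ContDiffAt ℝ 2 w x ∧ ContDiffAt ℝ 2 Ψ x :=
    ⟨hw2.contDiffAt (isOpen_ball.mem_nhds hx), hΨd.contDiffAt (isOpen_ball.mem_nhds hx)⟩
  have hupper : ∀ x ∈ closedBall c R, (w - Ψ) x ≤ 0 := by
    refine le_of_forall_mem_sphere_le_of_laplacian_nonneg (hw.sub hΨ) (hw2.sub hΨd)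
      (fun x hx => ?_) (fun x hx => ?_)
    · rw [(hat x hx).1.laplacian_sub (hat x hx).2, (hwh x hx).2.self_of_nhds]
      simpa using hΔΨ x hx
    · simpa using (abs_le.1 (hbd x hx)).2
  have hlower : ∀ x ∈ closedBall c R, (-w - Ψ) x ≤ 0 := by
    refine le_of_forall_mem_sphere_le_of_laplacian_nonneg (hw.neg.sub hΨ) (hw2.neg.sub hΨd)
      (fun x hx => ?_) (fun x hx => ?_)
    · rw [ContDiffAt.laplacian_sub (f₁ := -w) (hat x hx).1.neg (hat x hx).2, laplacian_neg,
        Pi.neg_apply, (hwh x hx).2.self_of_nhds]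
      simpa using hΔΨ x hx
    · simpa [neg_le] using (abs_le.1 (hbd x hx)).1
  intro x hx
  have h1 := hupper x hx
  have h2 := hlower x hx
  simp only [Pi.sub_apply, Pi.neg_apply] at h1 h2
  exact abs_le.2 ⟨by linarith, by linarith⟩

end Laplacian

theorem lap_eq_laplacian {d : ℕ} {f : EuclideanSpace ℝ (Fin d) → ℝ}
    {x : EuclideanSpace ℝ (Fin d)} (hf : ContDiffAt ℝ 2 f x) : lap f x = Δ f x := by
  have hD : DifferentiableAt ℝ (fderiv ℝ f) x :=
    (hf.fderiv_right (m := 1) (by norm_num)).differentiableAt one_ne_zero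
  rw [laplacian_eq_iteratedFDeriv_orthonormalBasis f (EuclideanSpace.basisFun (Fin d) ℝ)]
  refine Finset.sum_congr rfl fun i _ => ?_
  rw [EuclideanSpace.basisFun_apply, iteratedFDeriv_two_apply,
    fderiv_clm_apply hD (differentiableAt_const _)]
  simp

theorem harmonicOnNhd_of_lap_eq_zero {d : ℕ} {u : EuclideanSpace ℝ (Fin d) → ℝ}
    {s : Set (EuclideanSpace ℝ (Fin d))} (hs : IsOpen s) (hu : ContDiffOn ℝ 2 u s)
    (h : ∀ x ∈ s, lap u x = 0) : HarmonicOnNhd u s := fun x hx =>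
  ⟨hu.contDiffAt (hs.mem_nhds hx), by
    filter_upwards [hs.mem_nhds hx] with y hy
    rw [Pi.zero_apply, ← lap_eq_laplacian (hu.contDiffAt (hs.mem_nhds hy)), h y hy]⟩

section Barrier

variable {E : Type*} [NormedAddCommGroup E] [InnerProductSpace ℝ E]

noncomputable def holderBarrier (x₀ : E) (p : ℝ) (y : E) : ℝ := (2 - 2 * ⟪x₀, y⟫_ℝ) ^ p

theorem two_sub_two_inner_eq {x₀ : E} (hx₀ : ‖x₀‖ = 1) (y : E) :
    2 - 2 * ⟪x₀, y⟫_ℝ = ‖y - x₀‖ ^ 2 + (1 - ‖y‖ ^ 2) := by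
  rw [norm_sub_sq_real, hx₀, real_inner_comm]
  ring

theorem two_sub_two_inner_pos {x₀ y : E} (hx₀ : ‖x₀‖ ≤ 1) (hy : ‖y‖ < 1) :
    0 < 2 - 2 * ⟪x₀, y⟫_ℝ := by
  nlinarith [real_inner_le_norm x₀ y, norm_nonneg x₀, norm_nonneg y]

theorem holderBarrier_of_norm_eq_one {x₀ y : E} (hx₀ : ‖x₀‖ = 1) (hy : ‖y‖ = 1) (σ : ℝ) :
    holderBarrier x₀ (σ / 2) y = ‖y - x₀‖ ^ σ := by
  rw [holderBarrier, two_sub_two_inner_eq hx₀, hy, one_pow, sub_self, add_zero,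
    ← Real.rpow_natCast, ← Real.rpow_mul (norm_nonneg _), Nat.cast_ofNat,
    mul_div_cancel₀ σ two_ne_zero]

theorem holderBarrier_le {x₀ y : E} (hx₀ : ‖x₀‖ = 1) (hy : ‖y‖ ≤ 1) {p : ℝ} (hp : 0 ≤ p) :
    holderBarrier x₀ p y ≤ (4 * ‖y - x₀‖) ^ p := by
  have hdist : ‖y - x₀‖ ≤ 2 := (norm_sub_le y x₀).trans (by linarith)
  have hgap : 1 - ‖y‖ ≤ ‖y - x₀‖ := by
    simpa [hx₀] using norm_sub_norm_le x₀ y |>.trans_eq (norm_sub_rev x₀ y)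
  refine Real.rpow_le_rpow ?_ ?_ hp
  · rw [two_sub_two_inner_eq hx₀]
    nlinarith [norm_nonneg y]
  · rw [two_sub_two_inner_eq hx₀]
    nlinarith [norm_nonneg y, norm_nonneg (y - x₀)]

theorem continuous_holderBarrier (x₀ : E) {p : ℝ} (hp : 0 ≤ p) :
    Continuous (holderBarrier x₀ p) :=
  Continuous.rpow_const (by fun_prop) fun _ => Or.inr hp

theorem contDiffOn_holderBarrier {x₀ : E} (hx₀ : ‖x₀‖ ≤ 1) (p : ℝ) :
    ContDiffOn ℝ 2 (holderBarrier x₀ p) (ball 0 1) := fun y hy =>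
  ((Real.contDiffAt_rpow_const_of_ne
    (two_sub_two_inner_pos hx₀ (mem_ball_zero_iff.1 hy)).ne').comp y
      (contDiff_const.sub (contDiff_const.mul (contDiff_const.inner ℝ contDiff_id))).contDiffAt
    ).contDiffWithinAt

theorem concaveOn_holderBarrier (x₀ : E) {p : ℝ} (hp₀ : 0 ≤ p) (hp₁ : p ≤ 1) :
    ConcaveOn ℝ {y | 0 ≤ 2 - 2 * ⟪x₀, y⟫_ℝ} (holderBarrier x₀ p) := by
  let ℓ : E →ᵃ[ℝ] ℝ := AffineMap.const ℝ E 2 - ((2 : ℝ) • innerₛₗ ℝ x₀).toAffineMap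
  have hℓ : ⇑ℓ = fun y => 2 - 2 * ⟪x₀, y⟫_ℝ := by
    funext y; simp [ℓ]
  have := (Real.concaveOn_rpow hp₀ hp₁).comp_affineMap ℓ
  rw [hℓ] at this
  exact this

theorem laplacian_holderBarrier_nonpos [FiniteDimensional ℝ E] {x₀ x : E} (hx₀ : ‖x₀‖ ≤ 1)
    (hx : x ∈ ball (0 : E) 1) {p : ℝ} (hp₀ : 0 ≤ p) (hp₁ : p ≤ 1) :
    Δ (holderBarrier x₀ p) x ≤ 0 :=
  (concaveOn_holderBarrier x₀ hp₀ hp₁).laplacian_nonpos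
    (mem_of_superset (isOpen_ball.mem_nhds hx) fun _ hy =>
      (two_sub_two_inner_pos hx₀ (mem_ball_zero_iff.1 hy)).le)
    ((contDiffOn_holderBarrier hx₀ p).contDiffAt (isOpen_ball.mem_nhds hx))

end Barrier

theorem exists_mem_sphere_norm_sub_eq {E : Type*} [NormedAddCommGroup E] [NormedSpace ℝ E]
    [Nontrivial E] {y : E} (hy : ‖y‖ ≤ 1) : ∃ y' ∈ sphere (0 : E) 1, ‖y - y'‖ = 1 - ‖y‖ := by
  rcases eq_or_ne y 0 with rfl | hy0
  · obtain ⟨e, he⟩ := exists_norm_eq E zero_le_one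
    exact ⟨e, by simpa using he, by simp [he]⟩
  have hpos : 0 < ‖y‖ := norm_pos_iff.2 hy0
  refine ⟨‖y‖⁻¹ • y, by simp [norm_smul, hpos.ne'], ?_⟩
  rw [norm_sub_rev, show ‖y‖⁻¹ • y - y = (‖y‖⁻¹ - 1) • y by rw [sub_smul, one_smul], norm_smul,
    Real.norm_eq_abs, abs_of_nonneg (sub_nonneg.2 (one_le_inv₀ hpos |>.2 hy)), sub_mul,
    inv_mul_cancel₀ hpos.ne', one_mul]

section HolderOnSphere

variable {E : Type*} [NormedAddCommGroup E] [InnerProductSpace ℝ E] [FiniteDimensional ℝ E]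
  [Nontrivial E] {u : E → ℝ} {K σ : ℝ}
  (hu : ContinuousOn u (closedBall 0 1)) (huh : HarmonicOnNhd u (ball 0 1)) (hK : 0 ≤ K)
  (hσ₀ : 0 ≤ σ) (hσ₂ : σ ≤ 2)
  (hbd : ∀ x ∈ sphere (0 : E) 1, ∀ y ∈ sphere (0 : E) 1, |u x - u y| ≤ K * ‖x - y‖ ^ σ)
include hu huh hK hσ₀ hσ₂ hbd

theorem abs_sub_le_of_mem_sphere {x₀ x : E} (hx₀ : x₀ ∈ sphere (0 : E) 1)
    (hx : x ∈ closedBall (0 : E) 1) : |u x - u x₀| ≤ K * (4 * ‖x - x₀‖) ^ (σ / 2) := by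
  have hp₀ : 0 ≤ σ / 2 := by linarith
  have hp₁ : σ / 2 ≤ 1 := by linarith
  rw [mem_sphere_zero_iff_norm] at hx₀
  have hcomp := abs_le_of_forall_mem_sphere_abs_le (w := u - fun _ => u x₀)
    (Ψ := K • holderBarrier x₀ (σ / 2)) (hu.sub continuousOn_const)
    (huh.sub (harmonicOnNhd_const _))
    ((continuous_holderBarrier x₀ hp₀).continuousOn.const_smul K)
    ((contDiffOn_holderBarrier hx₀.le _).const_smul K) (fun y hy => ?_) (fun y hy => ?_) x hx
  · refine hcomp.trans (mul_le_mul_of_nonneg_left ?_ hK)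
    exact holderBarrier_le hx₀ (mem_closedBall_zero_iff.1 hx) hp₀
  · rw [laplacian_smul K ((contDiffOn_holderBarrier hx₀.le _).contDiffAt
      (isOpen_ball.mem_nhds hy)), smul_eq_mul]
    exact mul_nonpos_of_nonneg_of_nonpos hK (laplacian_holderBarrier_nonpos hx₀.le hy hp₀ hp₁)
  · simp only [Pi.sub_apply, Pi.smul_apply, smul_eq_mul,
      holderBarrier_of_norm_eq_one hx₀ (mem_sphere_zero_iff_norm.1 hy)]
    exact hbd y hy x₀ (mem_sphere_zero_iff_norm.2 hx₀)

theorem abs_sub_le_of_one_sub_norm_le {y z : E} (hy : y ∈ closedBall (0 : E) 1)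
    (hz : z ∈ closedBall (0 : E) 1) (hyz : 1 - ‖y‖ ≤ ‖y - z‖) :
    |u y - u z| ≤ 2 * K * (8 * ‖y - z‖) ^ (σ / 2) := by
  obtain ⟨y', hy', hyy'⟩ := exists_mem_sphere_norm_sub_eq (mem_closedBall_zero_iff.1 hy)
  have hzy' : ‖z - y'‖ ≤ 2 * ‖y - z‖ := by
    calc ‖z - y'‖ ≤ ‖z - y‖ + ‖y - y'‖ := norm_sub_le_norm_sub_add_norm_sub z y y'
      _ ≤ 2 * ‖y - z‖ := by rw [norm_sub_rev z y, hyy']; linarith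
  have hmono {t : ℝ} (ht₀ : 0 ≤ t) (ht : t ≤ 2 * ‖y - z‖) :
      K * (4 * t) ^ (σ / 2) ≤ K * (8 * ‖y - z‖) ^ (σ / 2) :=
    mul_le_mul_of_nonneg_left (Real.rpow_le_rpow (by positivity) (by linarith) (by linarith)) hK
  calc |u y - u z| ≤ |u y - u y'| + |u z - u y'| := by
        simpa only [abs_sub_comm (u y') (u z)] using abs_sub_le (u y) (u y') (u z)
    _ ≤ K * (4 * ‖y - y'‖) ^ (σ / 2) + K * (4 * ‖z - y'‖) ^ (σ / 2) :=
      add_le_add (abs_sub_le_of_mem_sphere hu huh hK hσ₀ hσ₂ hbd hy' hy)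
        (abs_sub_le_of_mem_sphere hu huh hK hσ₀ hσ₂ hbd hy' hz)
    _ ≤ 2 * K * (8 * ‖y - z‖) ^ (σ / 2) := by
      linarith [hmono (t := ‖y - y'‖) (norm_nonneg _) (by linarith [norm_nonneg (y - z)]),
        hmono (norm_nonneg _) hzy']

theorem abs_sub_le_of_norm_le_one_sub {y z : E} (hyz : ‖y‖ ≤ 1 - ‖y - z‖) :
    |u y - u z| ≤ 2 * K * (8 * ‖y - z‖) ^ (σ / 2) := by
  set δ := ‖y - z‖
  set h := z - y
  have hh : ‖h‖ = δ := norm_sub_rev z y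
  have hshift {x : E} (hx : ‖x‖ ≤ 1 - δ) : ‖x‖ ≤ 1 ∧ ‖x + h‖ ≤ 1 :=
    ⟨by linarith [norm_nonneg h], (norm_add_le x h).trans (by linarith)⟩
  have hshift' {x : E} (hx : ‖x‖ < 1 - δ) : ‖x‖ < 1 ∧ ‖x + h‖ < 1 :=
    ⟨by linarith [norm_nonneg h], (norm_add_le x h).trans_lt (by linarith)⟩
  have hcomp := abs_le_of_forall_mem_sphere_abs_le (c := 0) (R := 1 - δ)
    (w := (fun x => u (x + h)) - u) (Ψ := fun _ => 2 * K * (8 * δ) ^ (σ / 2))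
    ((hu.comp (continuous_add_const h).continuousOn fun x hx =>
        mem_closedBall_zero_iff.2 (hshift (mem_closedBall_zero_iff.1 hx)).2).sub
      (hu.mono fun x hx => mem_closedBall_zero_iff.2 (hshift (mem_closedBall_zero_iff.1 hx)).1))
    (fun x hx => (HarmonicAt.comp_add_right
      (huh _ (mem_ball_zero_iff.2 (hshift' (mem_ball_zero_iff.1 hx)).2))).sub
        (huh x (mem_ball_zero_iff.2 (hshift' (mem_ball_zero_iff.1 hx)).1)))
    continuousOn_const contDiffOn_const (by simp) (fun x hx => ?_) y
    (mem_closedBall_zero_iff.2 hyz)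
  · simpa [h, abs_sub_comm] using hcomp
  · rw [mem_sphere_zero_iff_norm] at hx
    have hb := abs_sub_le_of_one_sub_norm_le hu huh hK hσ₀ hσ₂ hbd
      (mem_closedBall_zero_iff.2 (hshift hx.le).1) (mem_closedBall_zero_iff.2 (hshift hx.le).2)
      (by rw [sub_add_cancel_left, norm_neg, hh, hx]; linarith)
    rwa [sub_add_cancel_left, norm_neg, hh, abs_sub_comm] at hb

theorem abs_sub_le_of_mem_closedBall {y z : E} (hy : y ∈ closedBall (0 : E) 1)
    (hz : z ∈ closedBall (0 : E) 1) : |u y - u z| ≤ 2 * 5 ^ σ * K * ‖y - z‖ ^ (σ / 2) := by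
  have h8 : (8 : ℝ) ^ (σ / 2) ≤ 5 ^ σ := by
    rw [show (5 : ℝ) ^ σ = 25 ^ (σ / 2) by
      rw [show (25 : ℝ) = 5 ^ (2 : ℝ) by norm_num, ← Real.rpow_mul (by norm_num)]; ring_nf]
    exact Real.rpow_le_rpow (by norm_num) (by norm_num) (by linarith)
  calc |u y - u z| ≤ 2 * K * (8 * ‖y - z‖) ^ (σ / 2) := by
        rcases le_or_gt ‖y‖ (1 - ‖y - z‖) with hdeep | hnear
        · exact abs_sub_le_of_norm_le_one_sub hu huh hK hσ₀ hσ₂ hbd hdeep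
        · exact abs_sub_le_of_one_sub_norm_le hu huh hK hσ₀ hσ₂ hbd hy hz (by linarith)
    _ = 2 * K * 8 ^ (σ / 2) * ‖y - z‖ ^ (σ / 2) := by
        rw [Real.mul_rpow (by norm_num) (norm_nonneg _)]; ring
    _ ≤ 2 * 5 ^ σ * K * ‖y - z‖ ^ (σ / 2) := by
        have := mul_le_mul_of_nonneg_left h8 hK
        have := Real.rpow_nonneg (norm_nonneg (y - z)) (σ / 2)
        nlinarith

end HolderOnSphere

/-- Proposition 2.1: quantified global Hölder regularity for the harmonic extension of
Hölder boundary data on the unit ball. -/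
theorem harmonic_extension_global_holder {d : ℕ} (hd : 2 ≤ d)
    (σ : ℝ) (hσ : 0 < σ) (hσ1 : σ ≤ 1)
    (u g : EuclideanSpace ℝ (Fin d) → ℝ)
    (hu : ContinuousOn u (closedBall (0 : EuclideanSpace ℝ (Fin d)) 1))
    (husmooth : ContDiffOn ℝ 2 u (ball (0 : EuclideanSpace ℝ (Fin d)) 1))
    (hharm : ∀ x ∈ ball (0 : EuclideanSpace ℝ (Fin d)) 1, lap u x = 0)
    (hbdry : ∀ x : EuclideanSpace ℝ (Fin d), ‖x‖ = 1 → u x = g x)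
    (Mg Kg : ℝ) (hMg : 0 ≤ Mg) (hKg : 0 ≤ Kg)
    (hgbd : ∀ x : EuclideanSpace ℝ (Fin d), ‖x‖ = 1 → |g x| ≤ Mg)
    (hgsemi : ∀ x : EuclideanSpace ℝ (Fin d), ‖x‖ = 1 →
      ∀ y : EuclideanSpace ℝ (Fin d), ‖y‖ = 1 → |g x - g y| ≤ Kg * ‖x - y‖ ^ σ) :
    ∀ x ∈ closedBall (0 : EuclideanSpace ℝ (Fin d)) 1,
      ∀ y ∈ closedBall (0 : EuclideanSpace ℝ (Fin d)) 1,
        ∀ z ∈ closedBall (0 : EuclideanSpace ℝ (Fin d)) 1,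
          y ≠ z →
            |u x| + |u y - u z| / ‖y - z‖ ^ (σ / 2) ≤
              2 * d * 5 ^ σ * (Mg + Kg) := by
  intro x hx y hy z hz hyz
  have : NeZero d := ⟨by omega⟩
  have huh := harmonicOnNhd_of_lap_eq_zero isOpen_ball husmooth hharm
  have hsup : |u x| ≤ Mg :=
    abs_le_of_forall_mem_sphere_abs_le (Ψ := fun _ => Mg) hu huh continuousOn_const
      contDiffOn_const (by simp) (fun b hb => by
        rw [mem_sphere_zero_iff_norm] at hb
        exact hbdry b hb ▸ hgbd b hb) x hx
  have hholder : |u y - u z| / ‖y - z‖ ^ (σ / 2) ≤ 2 * 5 ^ σ * Kg := by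
    rw [div_le_iff₀ (Real.rpow_pos_of_pos (norm_pos_iff.2 (sub_ne_zero.2 hyz)) _)]
    refine abs_sub_le_of_mem_closedBall hu huh hKg hσ.le (by linarith) (fun a ha b hb => ?_) hy hz
    rw [mem_sphere_zero_iff_norm] at ha hb
    rw [hbdry a ha, hbdry b hb]
    exact hgsemi a ha b hb
  have h5 : (1 : ℝ) ≤ 5 ^ σ := Real.one_le_rpow (by norm_num) hσ.le
  have hd' : (2 : ℝ) ≤ d := by exact_mod_cast hd
  nlinarith [mul_nonneg hMg (sub_nonneg.2 h5), mul_nonneg hKg (sub_nonneg.2 h5)]
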